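/- arXiv:1111.3399 — 4 statements merged into one kernel-verified Lean document; each statement's English description precedes it below -/
import Mathlib

section
/- Assume κ is UD-self-dual and 𝗊 : P → ℝ_{>0} is such that 𝗊² satisfies the Kerov condition with a parameter t > 0. Then for every μ ∈ 𝔾, every n ≥ 0 and every λ ∈ 𝔾_n: (T_n P*_μ)(λ) − P*_μ(λ) = −(|μ|(|μ|−1+t)/((n+1)(n+t))) · P*_μ(λ) + ((n+1−|μ|)/((n+1)(n+t))) · Σ_{ρ : ρ ↗ μ} κ(ρ,μ) 𝗊(μ∖ρ)² P*_ρ(λ), where (T_n f)(λ) = Σ_{λ̃∈𝔾_n} T_n(λ,λ̃) f(λ̃) and P*_μ is restricted to 𝔾_n. -/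
open scoped BigOperators Classical

namespace IdealGraph

variable {P : Type*} [PartialOrder P]

/-- A finite order ideal of the poset `P`, encoded as a down-closed `Finset`. -/
def IsIdealF (s : Finset P) : Prop := ∀ ⦃x⦄, x ∈ s → ∀ ⦃y⦄, y ≤ x → y ∈ s

/-- The vertex set of the branching graph of ideals `𝔾 = J(P)`. -/
abbrev G (P : Type*) [PartialOrder P] := {s : Finset P // IsIdealF s}

/-- The `n`-th level `𝔾_n` of the branching graph. -/
abbrev Lvl (P : Type*) [PartialOrder P] (n : ℕ) := {s : Finset P // IsIdealF s ∧ s.card = n}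

/-- `CoversF μ l` : `μ ↗ l` is an edge of the branching graph of ideals. -/
def CoversF (μ l : Finset P) : Prop :=
  IsIdealF μ ∧ IsIdealF l ∧ μ ⊆ l ∧ l.card = μ.card + 1

/-- All levels `𝔾_n` of the graph are finite. -/
def LevelsFinite (P : Type*) [PartialOrder P] : Prop :=
  ∀ n : ℕ, {s : Finset P | IsIdealF s ∧ s.card = n}.Finite

/-- An edge multiplicity function is (strictly) positive on all edges. -/
def EdgePositive (κ : Finset P → Finset P → ℝ) : Prop :=
  ∀ μ l, CoversF μ l → 0 < κ μ l

/-- UD-self-duality of a multiplicity function: for every quadrangle `μ ρ ν λ`. -/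
def UDSelfDual (κ : Finset P → Finset P → ℝ) : Prop :=
  ∀ μ ρ l ν : Finset P, CoversF μ ρ → CoversF ρ ν → CoversF μ l → CoversF l ν →
    ρ ≠ l → κ μ l * κ μ ρ = κ l ν * κ ρ ν

/-- The value of a function `q : P → R` on the box `l ∖ μ` of an edge `μ ↗ l`. -/
noncomputable def bx {R : Type*} [AddCommMonoid R] (q : P → R) (μ l : Finset P) : R :=
  ∑ x ∈ l \ μ, q x

/-- The Kerov condition with parameter `t` for the function `q2 = 𝗊²`. -/
def KerovCond (κ : Finset P → Finset P → ℝ) (q2 : P → ℂ) (t : ℂ) : Prop :=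
  ∀ l : Finset P, IsIdealF l →
    (∑' ν : {ν : Finset P // CoversF l ν}, (κ l ν.1 : ℂ) ^ 2 * bx q2 l ν.1) -
      (∑' μ : {μ : Finset P // CoversF μ l}, (κ μ.1 l : ℂ) ^ 2 * bx q2 μ.1 l)
      = 2 * (l.card : ℂ) + t

/-- Weighted number of saturated chains of length `n` from the ideal `μ` up to the ideal `l`. -/
noncomputable def dimRel (κ : Finset P → Finset P → ℝ) : ℕ → Finset P → Finset P → ℝ
  | 0, μ, l => if μ = l then 1 else 0
  | n + 1, μ, l =>
      ∑ x ∈ l, if CoversF (l.erase x) l ∧ μ ⊆ l.erase x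
        then κ (l.erase x) l * dimRel κ n μ (l.erase x) else 0

/-- Relative dimension `dim(μ, l)`. -/
noncomputable def dimI (κ : Finset P → Finset P → ℝ) (μ l : Finset P) : ℝ :=
  dimRel κ (l.card - μ.card) μ l

/-- Dimension `dim l = dim(∅, l)`. -/
noncomputable def dimT (κ : Finset P → Finset P → ℝ) (l : Finset P) : ℝ :=
  dimI κ ∅ l

/-- The relative dimension function `P*_μ`. -/
noncomputable def Pstar (κ : Finset P → Finset P → ℝ) (μ l : Finset P) : ℝ :=
  (l.card.descFactorial μ.card : ℝ) * dimI κ μ l / dimT κ l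

/-- The mixed measure `M_ξ`. -/
noncomputable def Mxi (κ : Finset P → Finset P → ℝ) (q : P → ℝ) (t ξ : ℝ) (l : Finset P) : ℝ :=
  (1 - ξ) ^ t * ξ ^ l.card * (dimT κ l / (Nat.factorial l.card : ℝ)) ^ 2 * ∏ x ∈ l, q x ^ 2

/-- The coherent measure `M_n(l)` (for `n = |l|`). -/
noncomputable def Mcoh (κ : Finset P → Finset P → ℝ) (q : P → ℝ) (t : ℝ) (l : Finset P) : ℝ :=
  dimT κ l ^ 2 * (∏ x ∈ l, q x ^ 2) /
    ((Nat.factorial l.card : ℝ) * Polynomial.eval t (ascPochhammer ℝ l.card))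

/-- The jump rates `Q(l, ρ)` of the Markov jump dynamics. -/
noncomputable def Qrate (κ : Finset P → Finset P → ℝ) (q : P → ℝ) (t ξ : ℝ)
    (l ρ : Finset P) : ℝ :=
  if CoversF ρ l then (1 - ξ)⁻¹ * l.card * (κ ρ l * dimT κ ρ / dimT κ l)
  else if CoversF l ρ then
    (1 - ξ)⁻¹ * (ξ * ((l.card : ℝ) + t)) *
      ((Mcoh κ q t ρ / Mcoh κ q t l) * (κ l ρ * dimT κ l / dimT κ ρ))
  else if ρ = l then -((1 - ξ)⁻¹ * ((l.card : ℝ) + ξ * ((l.card : ℝ) + t)))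
  else 0

/-- The function `𝔐_l`. -/
noncomputable def Mfrak (κ : Finset P → Finset P → ℝ) (q : P → ℝ) (ξ : ℝ)
    (l ν : Finset P) : ℝ :=
  ∑ μ ∈ l.powerset.filter (fun s => IsIdealF s),
    (ξ / (ξ - 1)) ^ (l.card - μ.card) *
      (dimI κ μ l / (Nat.factorial (l.card - μ.card) : ℝ)) *
      (∏ x ∈ l \ μ, q x ^ 2) * Pstar κ μ ν

/-- The operator `U` built from `κ` and `q`. -/
noncomputable def Uop (κ : Finset P → Finset P → ℝ) (q : P → ℂ) (f : Finset P → ℂ) :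
    Finset P → ℂ :=
  fun l => ∑' μ : {μ : Finset P // CoversF μ l}, (κ μ.1 l : ℂ) * bx q μ.1 l * f μ.1

/-- The operator `D` built from `κ` and `q`. -/
noncomputable def Dop (κ : Finset P → Finset P → ℝ) (q : P → ℂ) (f : Finset P → ℂ) :
    Finset P → ℂ :=
  fun l => ∑' ν : {ν : Finset P // CoversF l ν}, (κ l ν.1 : ℂ) * bx q l ν.1 * f ν.1

/-- The standard basis vector `δ_l`. -/
noncomputable def delta (l : Finset P) : Finset P → ℂ := fun ρ => if ρ = l then 1 else 0


/-- Down transition probability `p↓(ν, μ)`. -/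
noncomputable def pDown {P : Type*} [PartialOrder P]
    (κ : Finset P → Finset P → ℝ) (ν μ : Finset P) : ℝ :=
  if CoversF μ ν then κ μ ν * dimT κ μ / dimT κ ν else 0

/-- Up transition probability `p↑(l, ν)`. -/
noncomputable def pUp {P : Type*} [PartialOrder P]
    (κ : Finset P → Finset P → ℝ) (q : P → ℝ) (t : ℝ) (l ν : Finset P) : ℝ :=
  if CoversF l ν then (Mcoh κ q t ν / Mcoh κ q t l) * (κ l ν * dimT κ l / dimT κ ν) else 0

/-- The up/down transition matrix `T_n(l, l')` (for `n = |l|`). -/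
noncomputable def TnMat {P : Type*} [PartialOrder P]
    (κ : Finset P → Finset P → ℝ) (q : P → ℝ) (t : ℝ) (l l' : Finset P) : ℝ :=
  ∑' ν : Lvl P (l.card + 1), pUp κ q t l ν.1 * pDown κ ν.1 l'

/-! Let `D` be the weighted up operator `(D f)(λ) = ∑_{ν ↘ λ} κ(λ,ν) 𝗊²(ν∖λ) f(ν)` and `U` the
down operator `(U f)(λ) = ∑_{μ ↗ λ} κ(μ,λ) f(μ)`. One up/down step of the chain sends `P*_μ` to
`|λ|^{↓|μ|} (D dim(μ,·))(λ) / ((|λ|+1)(|λ|+t) dim λ)`, so everything reduces to computing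
`D dim(μ,·)`. Expanding `dim(μ,ν)` along the ideals covered by `ν` and swapping quadrangles, which
UD-self-duality makes weight-preserving, the Kerov condition gives the commutation relation
`D dim(μ,·) = (2|λ|+t) dim(μ,·) + U D dim(μ,·)` on levels `|λ| ≥ |μ|`. Induction on `λ` then yields
`(D dim(μ,·))(λ) = ((|λ|+1)(|λ|+t) - |μ|(|μ|-1+t)) dim(μ,λ) + ∑_{ρ ↗ μ} κ(ρ,μ) 𝗊²(μ∖ρ) dim(ρ,λ)`,
which is the theorem after division by `dim λ`. -/

lemma IsIdealF.union {s s' : Finset P} (hs : IsIdealF s) (hs' : IsIdealF s') :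
    IsIdealF (s ∪ s') := by
  intro x hx y hy
  rcases Finset.mem_union.mp hx with h | h
  · exact Finset.mem_union_left _ (hs h hy)
  · exact Finset.mem_union_right _ (hs' h hy)

lemma IsIdealF.inter {s s' : Finset P} (hs : IsIdealF s) (hs' : IsIdealF s') :
    IsIdealF (s ∩ s') := fun _ hx _ hy =>
  Finset.mem_inter.mpr ⟨hs (Finset.mem_inter.mp hx).1 hy, hs' (Finset.mem_inter.mp hx).2 hy⟩

lemma CoversF.exists_eq_insert {μ l : Finset P} (h : CoversF μ l) :
    ∃ x ∉ μ, l = insert x μ :=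
  (Finset.exists_eq_insert_iff.mpr ⟨h.2.2.1, h.2.2.2.symm⟩).imp fun _ ⟨hx, h⟩ => ⟨hx, h.symm⟩

lemma bx_insert {α R : Type*} [AddCommMonoid R] (w : α → R) {μ : Finset α} {x : α}
    (hx : x ∉ μ) :
    bx w μ (insert x μ) = w x := by
  simp [bx, Finset.insert_sdiff_of_notMem _ hx]

lemma CoversF.bx_sq {q : P → ℝ} {ρ μ : Finset P} (h : CoversF ρ μ) :
    bx q ρ μ ^ 2 = bx (fun x => q x ^ 2) ρ μ := by
  obtain ⟨x, hx, rfl⟩ := h.exists_eq_insert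
  rw [bx_insert _ hx, bx_insert _ hx]

lemma CoversF.quadrangle_of_common_top {l l' ν : Finset P} (h : CoversF l ν) (h' : CoversF l' ν)
    (hne : l ≠ l') :
    CoversF (l ∩ l') l ∧ CoversF (l ∩ l') l' ∧ ν \ l = l' \ (l ∩ l') ∧ ν = l ∪ l' := by
  obtain ⟨hl, hν, hlν, hcard⟩ := h
  obtain ⟨hl', -, hl'ν, hcard'⟩ := h'
  have hlt : l.card < (l ∪ l').card := Finset.card_lt_card <|
    Finset.ssubset_iff_subset_ne.mpr ⟨Finset.subset_union_left, fun heq => hne <|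
      (Finset.eq_of_subset_of_card_le (heq ▸ Finset.subset_union_right) (by omega)).symm⟩
  have hunion : ν = l ∪ l' :=
    (Finset.eq_of_subset_of_card_le (Finset.union_subset hlν hl'ν) (by omega)).symm
  have hinter := Finset.card_union_add_card_inter l l'
  rw [← hunion] at hinter
  refine ⟨⟨hl.inter hl', hl, Finset.inter_subset_left, by omega⟩,
    ⟨hl.inter hl', hl', Finset.inter_subset_right, by omega⟩, ?_, hunion⟩
  ext y
  simp only [hunion, Finset.mem_sdiff, Finset.mem_union, Finset.mem_inter]
  tauto

lemma CoversF.quadrangle_of_common_bottom {μ l l' : Finset P} (h : CoversF μ l)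
    (h' : CoversF μ l') (hne : l ≠ l') :
    CoversF l (l ∪ l') ∧ CoversF l' (l ∪ l') ∧ l ∩ l' = μ := by
  obtain ⟨-, hl, hμl, hcard⟩ := h
  obtain ⟨-, hl', hμl', hcard'⟩ := h'
  have hlt : (l ∩ l').card < l.card := Finset.card_lt_card <|
    Finset.ssubset_iff_subset_ne.mpr ⟨Finset.inter_subset_left, fun heq => hne <|
      Finset.eq_of_subset_of_card_le (heq ▸ Finset.inter_subset_right) (by omega)⟩
  have hinter : l ∩ l' = μ :=
    (Finset.eq_of_subset_of_card_le (Finset.subset_inter hμl hμl') (by omega)).symm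
  have hunion := Finset.card_union_add_card_inter l l'
  rw [hinter] at hunion
  exact ⟨⟨hl, hl.union hl', Finset.subset_union_left, by omega⟩,
    ⟨hl', hl.union hl', Finset.subset_union_right, by omega⟩, hinter⟩


lemma tsum_subtype_eq_sum {α M : Type*} [AddCommMonoid M] [TopologicalSpace M] {p : α → Prop}
    (s : Finset α) (hs : ∀ x, p x ↔ x ∈ s) (f : α → M) :
    ∑' x : {x // p x}, f x = ∑ x ∈ s, f x := by
  rw [← Finset.tsum_subtype s f]
  exact (Equiv.subtypeEquivRight hs).tsum_eq fun y : {x // x ∈ s} => f y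

noncomputable def downCovers (l : Finset P) : Finset (Finset P) :=
  l.powerset.filter (CoversF · l)

noncomputable def levelFinset (hLF : LevelsFinite P) (n : ℕ) : Finset (Finset P) :=
  (hLF n).toFinset

noncomputable def upCovers (hLF : LevelsFinite P) (l : Finset P) : Finset (Finset P) :=
  (levelFinset hLF (l.card + 1)).filter (CoversF l)

@[simp] lemma mem_downCovers {l ρ : Finset P} : ρ ∈ downCovers l ↔ CoversF ρ l := by
  simp only [downCovers, Finset.mem_filter, Finset.mem_powerset, and_iff_right_iff_imp]
  exact fun h => h.2.2.1

@[simp] lemma mem_levelFinset {hLF : LevelsFinite P} {n : ℕ} {s : Finset P} :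
    s ∈ levelFinset hLF n ↔ IsIdealF s ∧ s.card = n := by
  simp [levelFinset]

@[simp] lemma mem_upCovers {hLF : LevelsFinite P} {l ν : Finset P} :
    ν ∈ upCovers hLF l ↔ CoversF l ν := by
  simp only [upCovers, Finset.mem_filter, mem_levelFinset, and_iff_right_iff_imp]
  exact fun h => ⟨h.2.1, h.2.2.2⟩

lemma sum_downCovers_eq_sum_erase {M : Type*} [AddCommMonoid M] (l : Finset P)
    (f : Finset P → M) :
    ∑ ρ ∈ downCovers l, f ρ = ∑ x ∈ l, if CoversF (l.erase x) l then f (l.erase x) else 0 := by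
  rw [← Finset.sum_filter]
  refine (Finset.sum_bij (fun x _ => l.erase x) (fun x hx => ?_) (fun x hx y hy hxy => ?_)
    (fun ρ hρ => ?_) fun _ _ => rfl).symm
  · exact mem_downCovers.mpr (Finset.mem_filter.mp hx).2
  · by_contra hne
    have : x ∈ l.erase y := Finset.mem_erase.mpr ⟨hne, (Finset.mem_filter.mp hx).1⟩
    simp [← hxy] at this
  · obtain ⟨x, hx, hl⟩ := (mem_downCovers.mp hρ).exists_eq_insert
    have hρ' : l.erase x = ρ := by rw [hl, Finset.erase_insert hx]
    refine ⟨x, Finset.mem_filter.mpr ⟨hl ▸ Finset.mem_insert_self x ρ, ?_⟩, hρ'⟩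
    exact hρ' ▸ mem_downCovers.mp hρ

lemma sum_upCovers_sum_downCovers_erase {M : Type*} [AddCommMonoid M] (hLF : LevelsFinite P)
    (l : Finset P) (f : Finset P → Finset P → M) :
    ∑ ν ∈ upCovers hLF l, ∑ l' ∈ (downCovers ν).erase l, f (l ∩ l') l'
      = ∑ μ₀ ∈ downCovers l, ∑ l' ∈ (upCovers hLF μ₀).erase l, f μ₀ l' := by
  rw [Finset.sum_sigma', Finset.sum_sigma']
  refine Finset.sum_nbij' (fun p => ⟨l ∩ p.2, p.2⟩) (fun p => ⟨l ∪ p.2, p.2⟩) ?_ ?_ ?_ ?_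
    fun _ _ => rfl
  · rintro ⟨ν, l'⟩ hp
    simp only [Finset.mem_sigma, Finset.mem_erase, mem_upCovers, mem_downCovers] at hp ⊢
    have hq := hp.1.quadrangle_of_common_top hp.2.2 (Ne.symm hp.2.1)
    exact ⟨hq.1, hp.2.1, hq.2.1⟩
  · rintro ⟨μ₀, l'⟩ hp
    simp only [Finset.mem_sigma, Finset.mem_erase, mem_upCovers, mem_downCovers] at hp ⊢
    have hq := hp.1.quadrangle_of_common_bottom hp.2.2 (Ne.symm hp.2.1)
    exact ⟨hq.1, hp.2.1, hq.2.1⟩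
  · rintro ⟨ν, l'⟩ hp
    simp only [Finset.mem_sigma, Finset.mem_erase, mem_upCovers, mem_downCovers] at hp
    simp only [Sigma.mk.injEq, heq_eq_eq, and_true]
    exact (hp.1.quadrangle_of_common_top hp.2.2 (Ne.symm hp.2.1)).2.2.2.symm
  · rintro ⟨μ₀, l'⟩ hp
    simp only [Finset.mem_sigma, Finset.mem_erase, mem_upCovers, mem_downCovers] at hp
    simp only [Sigma.mk.injEq, heq_eq_eq, and_true]
    exact (hp.1.quadrangle_of_common_bottom hp.2.2 (Ne.symm hp.2.1)).2.2

lemma dimRel_eq_zero_of_not_subset (κ : Finset P → Finset P → ℝ) {m : ℕ} {μ l : Finset P}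
    (h : ¬ μ ⊆ l) : dimRel κ m μ l = 0 := by
  cases m with
  | zero => exact if_neg fun heq => h heq.subset
  | succ m =>
    exact Finset.sum_eq_zero fun x _ => if_neg fun hc => h (hc.2.trans (l.erase_subset x))

lemma dimRel_nonneg {κ : Finset P → Finset P → ℝ} (hκ : EdgePositive κ) (m : ℕ)
    (μ l : Finset P) : 0 ≤ dimRel κ m μ l := by
  induction m generalizing l with
  | zero => unfold dimRel; split <;> norm_num
  | succ m ih =>
    refine Finset.sum_nonneg fun x _ => ?_
    split
    · next hc => exact mul_nonneg (hκ _ _ hc.1).le (ih _)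
    · exact le_rfl

lemma dimI_nonneg {κ : Finset P → Finset P → ℝ} (hκ : EdgePositive κ) (μ l : Finset P) :
    0 ≤ dimI κ μ l :=
  dimRel_nonneg hκ _ μ l

lemma dimI_of_card_le (κ : Finset P → Finset P → ℝ) {μ l : Finset P} (h : l.card ≤ μ.card) :
    dimI κ μ l = if μ = l then 1 else 0 := by
  rw [dimI, Nat.sub_eq_zero_of_le h, dimRel]

lemma dimI_eq_zero_of_card_lt (κ : Finset P → Finset P → ℝ) {μ l : Finset P}
    (h : l.card < μ.card) : dimI κ μ l = 0 := by
  rw [dimI_of_card_le κ h.le, if_neg]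
  rintro rfl
  exact h.false

lemma dimI_eq_sum_downCovers (κ : Finset P → Finset P → ℝ) {μ l : Finset P}
    (h : μ.card < l.card) : dimI κ μ l = ∑ ρ ∈ downCovers l, κ ρ l * dimI κ μ ρ := by
  rw [dimI, show l.card - μ.card = l.card - μ.card - 1 + 1 by omega, dimRel,
    sum_downCovers_eq_sum_erase]
  refine Finset.sum_congr rfl fun x hx => ?_
  by_cases hc : CoversF (l.erase x) l
  · by_cases hsub : μ ⊆ l.erase x
    · rw [if_pos ⟨hc, hsub⟩, if_pos hc, dimI, Finset.card_erase_of_mem hx, Nat.sub_right_comm]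
    · rw [if_neg fun h => hsub h.2, if_pos hc, dimI, dimRel_eq_zero_of_not_subset κ hsub,
        mul_zero]
  · rw [if_neg fun h => hc h.1, if_neg hc]

lemma dimT_pos {κ : Finset P → Finset P → ℝ} (hκ : EdgePositive κ) {l : Finset P}
    (hl : IsIdealF l) : 0 < dimT κ l := by
  induction l using Finset.strongInduction with
  | H l ih =>
  rcases l.eq_empty_or_nonempty with rfl | hne
  · rw [dimT, dimI_of_card_le κ le_rfl, if_pos rfl]
    exact one_pos
  obtain ⟨a, hal, hmax⟩ := Finset.exists_maximal hne
  have hcov : CoversF (l.erase a) l := by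
    refine ⟨fun x hx y hyx => Finset.mem_erase.mpr ⟨?_, hl (Finset.mem_of_mem_erase hx) hyx⟩,
      hl, l.erase_subset a, by rw [Finset.card_erase_add_one hal]⟩
    rintro rfl
    exact Finset.ne_of_mem_erase hx (le_antisymm (hmax (Finset.mem_of_mem_erase hx) hyx) hyx)
  rw [dimT, dimI_eq_sum_downCovers κ (by simpa using hne.card_pos)]
  refine Finset.sum_pos' (fun ρ hρ => mul_nonneg (hκ _ _ (mem_downCovers.mp hρ)).le
    (dimI_nonneg hκ _ _)) ⟨l.erase a, mem_downCovers.mpr hcov, mul_pos (hκ _ _ hcov) ?_⟩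
  exact ih _ (Finset.erase_ssubset hal) hcov.1

section KeyIdentity

variable {κ : Finset P → Finset P → ℝ} {w : P → ℝ} {t : ℝ}

lemma KerovCond.sum_upCovers_sub_sum_downCovers (hK : KerovCond κ (fun x => (w x : ℂ)) t)
    (hLF : LevelsFinite P) {l : Finset P} (hl : IsIdealF l) :
    ∑ ν ∈ upCovers hLF l, κ l ν ^ 2 * bx w l ν - ∑ ρ ∈ downCovers l, κ ρ l ^ 2 * bx w ρ l
      = 2 * l.card + t := by
  have h := hK l hl
  rw [tsum_subtype_eq_sum (upCovers hLF l) (fun _ => mem_upCovers.symm)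
      fun ν => (κ l ν : ℂ) ^ 2 * bx (fun x => (w x : ℂ)) l ν,
    tsum_subtype_eq_sum (downCovers l) (fun _ => mem_downCovers.symm)
      fun ρ => (κ ρ l : ℂ) ^ 2 * bx (fun x => (w x : ℂ)) ρ l] at h
  simp only [bx, ← Complex.ofReal_sum] at h ⊢
  exact_mod_cast h

lemma UDSelfDual.mul_bx_mul_eq (hUD : UDSelfDual κ) (w : P → ℝ) {l l' ν : Finset P}
    (h : CoversF l ν) (h' : CoversF l' ν) (hne : l' ≠ l) :
    κ l ν * bx w l ν * κ l' ν = κ (l ∩ l') l * (κ (l ∩ l') l' * bx w (l ∩ l') l') := by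
  obtain ⟨hb, hb', hbox, -⟩ := h.quadrangle_of_common_top h' hne.symm
  have hbx : bx w l ν = bx w (l ∩ l') l' := by rw [bx, bx, hbox]
  rw [hbx]
  linear_combination -bx w (l ∩ l') l' * hUD (l ∩ l') l' l ν hb' h' hb h hne

lemma sum_upCovers_mul_dimI_eq_add_sum_downCovers (hLF : LevelsFinite P) (hUD : UDSelfDual κ)
    (hK : KerovCond κ (fun x => (w x : ℂ)) t) {μ l : Finset P} (hl : IsIdealF l)
    (h : μ.card ≤ l.card) :
    ∑ ν ∈ upCovers hLF l, κ l ν * bx w l ν * dimI κ μ ν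
      = (2 * l.card + t) * dimI κ μ l
        + ∑ μ₀ ∈ downCovers l,
            κ μ₀ l * ∑ ν ∈ upCovers hLF μ₀, κ μ₀ ν * bx w μ₀ ν * dimI κ μ ν := by
  have hsplit : ∀ ν ∈ upCovers hLF l, κ l ν * bx w l ν * dimI κ μ ν
      = dimI κ μ l * (κ l ν ^ 2 * bx w l ν)
        + ∑ l' ∈ (downCovers ν).erase l, κ l ν * bx w l ν * κ l' ν * dimI κ μ l' := by
    intro ν hν
    have hc := mem_upCovers.mp hν
    rw [dimI_eq_sum_downCovers κ (by rw [hc.2.2.2]; omega),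
      ← Finset.add_sum_erase _ _ (mem_downCovers.mpr hc), mul_add, Finset.mul_sum]
    exact congrArg₂ _ (by ring) (Finset.sum_congr rfl fun _ _ => by ring)
  have hswap : ∀ ν ∈ upCovers hLF l,
      ∑ l' ∈ (downCovers ν).erase l, κ l ν * bx w l ν * κ l' ν * dimI κ μ l'
        = ∑ l' ∈ (downCovers ν).erase l,
            κ (l ∩ l') l * (κ (l ∩ l') l' * bx w (l ∩ l') l' * dimI κ μ l') := by
    refine fun ν hν => Finset.sum_congr rfl fun l' hl' => ?_
    obtain ⟨hne, hl'⟩ := Finset.mem_erase.mp hl'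
    rw [hUD.mul_bx_mul_eq w (mem_upCovers.mp hν) (mem_downCovers.mp hl') hne]
    ring
  have hjoin : ∀ μ₀ ∈ downCovers l,
      ∑ l' ∈ (upCovers hLF μ₀).erase l, κ μ₀ l * (κ μ₀ l' * bx w μ₀ l' * dimI κ μ l')
        = κ μ₀ l * ∑ ν ∈ upCovers hLF μ₀, κ μ₀ ν * bx w μ₀ ν * dimI κ μ ν
          - dimI κ μ l * (κ μ₀ l ^ 2 * bx w μ₀ l) := by
    intro μ₀ hμ₀
    rw [← Finset.mul_sum, ← Finset.add_sum_erase _ _ (mem_upCovers.mpr (mem_downCovers.mp hμ₀))]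
    ring
  rw [Finset.sum_congr rfl hsplit, Finset.sum_add_distrib, Finset.sum_congr rfl hswap,
    sum_upCovers_sum_downCovers_erase hLF l
      fun μ₀ l' => κ μ₀ l * (κ μ₀ l' * bx w μ₀ l' * dimI κ μ l'),
    Finset.sum_congr rfl hjoin, Finset.sum_sub_distrib, ← Finset.mul_sum, ← Finset.mul_sum]
  linear_combination dimI κ μ l * hK.sum_upCovers_sub_sum_downCovers hLF hl

lemma sum_upCovers_mul_dimI_of_card_lt (hLF : LevelsFinite P) {μ l : Finset P}
    (h : l.card < μ.card) :
    ∑ ν ∈ upCovers hLF l, κ l ν * bx w l ν * dimI κ μ ν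
      = (((l.card : ℝ) + 1) * (l.card + t) - μ.card * (μ.card - 1 + t)) * dimI κ μ l
        + ∑ ρ ∈ downCovers μ, κ ρ μ * bx w ρ μ * dimI κ ρ l := by
  have hup : ∀ ν ∈ upCovers hLF l, κ l ν * bx w l ν * dimI κ μ ν
      = if ν = μ then κ l μ * bx w l μ else 0 := by
    intro ν hν
    rw [dimI_of_card_le κ (by rw [(mem_upCovers.mp hν).2.2.2]; omega)]
    by_cases he : ν = μ
    · rw [he, if_pos rfl, if_pos rfl, mul_one]
    · rw [if_neg (Ne.symm he), if_neg he, mul_zero]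
  have hdown : ∀ ρ ∈ downCovers μ, κ ρ μ * bx w ρ μ * dimI κ ρ l
      = if ρ = l then κ l μ * bx w l μ else 0 := by
    intro ρ hρ
    rw [dimI_of_card_le κ (by have := (mem_downCovers.mp hρ).2.2.2; omega)]
    by_cases he : ρ = l
    · rw [he, if_pos rfl, if_pos rfl, mul_one]
    · rw [if_neg he, if_neg he, mul_zero]
  rw [Finset.sum_congr rfl hup, Finset.sum_congr rfl hdown, Finset.sum_ite_eq',
    Finset.sum_ite_eq', dimI_eq_zero_of_card_lt κ h, mul_zero, zero_add]
  simp only [mem_upCovers, mem_downCovers]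

theorem sum_upCovers_mul_dimI (hLF : LevelsFinite P) (hUD : UDSelfDual κ)
    (hK : KerovCond κ (fun x => (w x : ℂ)) t) (μ : Finset P) {l : Finset P} (hl : IsIdealF l) :
    ∑ ν ∈ upCovers hLF l, κ l ν * bx w l ν * dimI κ μ ν
      = (((l.card : ℝ) + 1) * (l.card + t) - μ.card * (μ.card - 1 + t)) * dimI κ μ l
        + ∑ ρ ∈ downCovers μ, κ ρ μ * bx w ρ μ * dimI κ ρ l := by
  induction l using Finset.strongInduction with
  | H l ih =>
  rcases lt_or_ge l.card μ.card with hlt | hle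
  · exact sum_upCovers_mul_dimI_of_card_lt hLF hlt
  have hcard : ∀ μ₀ ∈ downCovers l, (μ₀.card : ℝ) + 1 = l.card := fun μ₀ hμ₀ => by
    rw [(mem_downCovers.mp hμ₀).2.2.2]; push_cast; rfl
  have hih : ∀ μ₀ ∈ downCovers l,
      κ μ₀ l * ∑ ν ∈ upCovers hLF μ₀, κ μ₀ ν * bx w μ₀ ν * dimI κ μ ν
        = ((l.card : ℝ) * (l.card - 1 + t) - μ.card * (μ.card - 1 + t))
            * (κ μ₀ l * dimI κ μ μ₀)
          + ∑ ρ ∈ downCovers μ, κ ρ μ * bx w ρ μ * (κ μ₀ l * dimI κ ρ μ₀) := by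
    intro μ₀ hμ₀
    have hc := mem_downCovers.mp hμ₀
    have hsub : μ₀ ⊂ l :=
      hc.2.2.1.ssubset_of_ne (ne_of_apply_ne Finset.card (by have := hc.2.2.2; omega))
    rw [ih μ₀ hsub hc.1, ← hcard μ₀ hμ₀, mul_add, Finset.mul_sum]
    exact congrArg₂ _ (by ring) (Finset.sum_congr rfl fun _ _ => by ring)
  -- When `|μ| = |l|` the recursion for `dim(μ, l)` fails, but then its coefficient vanishes.
  have hμ : ((l.card : ℝ) * (l.card - 1 + t) - μ.card * (μ.card - 1 + t))
        * ∑ μ₀ ∈ downCovers l, κ μ₀ l * dimI κ μ μ₀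
      = ((l.card : ℝ) * (l.card - 1 + t) - μ.card * (μ.card - 1 + t)) * dimI κ μ l := by
    rcases hle.lt_or_eq with hlt | heq
    · rw [← dimI_eq_sum_downCovers κ hlt]
    · rw [heq, sub_self, zero_mul, zero_mul]
  have hdimρ : ∀ ρ ∈ downCovers μ, ∑ μ₀ ∈ downCovers l, κ μ₀ l * dimI κ ρ μ₀ = dimI κ ρ l :=
    fun ρ hρ => (dimI_eq_sum_downCovers κ (by have := (mem_downCovers.mp hρ).2.2.2; omega)).symm
  rw [sum_upCovers_mul_dimI_eq_add_sum_downCovers hLF hUD hK hl hle, Finset.sum_congr rfl hih,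
    Finset.sum_add_distrib, ← Finset.mul_sum, hμ, Finset.sum_comm]
  simp only [← Finset.mul_sum]
  rw [Finset.sum_congr rfl fun ρ hρ => congrArg _ (hdimρ ρ hρ)]
  ring

end KeyIdentity

section UpDownChain

variable {κ : Finset P → Finset P → ℝ} {q : P → ℝ} {t : ℝ}

lemma pUp_of_covers (hκ : EdgePositive κ) (hq : ∀ x, 0 < q x) (ht : 0 < t) {l ν : Finset P}
    (h : CoversF l ν) :
    pUp κ q t l ν = κ l ν * bx (fun x => q x ^ 2) l ν * dimT κ ν
      / (((l.card : ℝ) + 1) * (l.card + t) * dimT κ l) := by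
  have hDl := (dimT_pos hκ h.1).ne'
  have hDν := (dimT_pos hκ h.2.1).ne'
  have hprod : ∏ y ∈ l, q y ^ 2 ≠ 0 :=
    Finset.prod_ne_zero_iff.mpr fun y _ => pow_ne_zero 2 (hq y).ne'
  have hpoch := (ascPochhammer_pos l.card t ht).ne'
  have ht' : t + l.card ≠ 0 := by positivity
  obtain ⟨x, hx, rfl⟩ := h.exists_eq_insert
  rw [pUp, if_pos h, Mcoh, Mcoh, bx_insert _ hx, Finset.prod_insert hx,
    Finset.card_insert_of_notMem hx, Nat.factorial_succ, ascPochhammer_succ_eval]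
  field_simp
  push_cast
  ring

lemma sum_pDown_mul_Pstar (hκ : EdgePositive κ) (hLF : LevelsFinite P) (μ : Finset P)
    {ν : Finset P} {n : ℕ} (hn : ν.card = n + 1) :
    ∑ l' ∈ levelFinset hLF n, pDown κ ν l' * Pstar κ μ l'
      = n.descFactorial μ.card * dimI κ μ ν / dimT κ ν := by
  have hsub : downCovers ν ⊆ levelFinset hLF n := fun l' hl' => by
    have hc := mem_downCovers.mp hl'
    exact mem_levelFinset.mpr ⟨hc.1, by have := hc.2.2.2; omega⟩
  rw [← Finset.sum_subset hsub fun l' _ hl' => by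
    rw [pDown, if_neg (mt mem_downCovers.mpr hl'), zero_mul]]
  have hterm : ∀ l' ∈ downCovers ν, pDown κ ν l' * Pstar κ μ l'
      = n.descFactorial μ.card * (κ l' ν * dimI κ μ l') / dimT κ ν := by
    intro l' hl'
    have hc := mem_downCovers.mp hl'
    have hD := (dimT_pos hκ hc.1).ne'
    rw [pDown, if_pos hc, Pstar, show l'.card = n by have := hc.2.2.2; omega]
    field_simp
  rw [Finset.sum_congr rfl hterm, ← Finset.sum_div, ← Finset.mul_sum]
  rcases le_or_gt μ.card n with hle | hlt
  · rw [← dimI_eq_sum_downCovers κ (by omega)]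
  · simp [Nat.descFactorial_eq_zero_iff_lt.mpr hlt]

lemma sum_TnMat_mul_Pstar (hκ : EdgePositive κ) (hq : ∀ x, 0 < q x) (ht : 0 < t)
    (hLF : LevelsFinite P) (μ : Finset P) (l : Finset P) :
    ∑ l' ∈ levelFinset hLF l.card, TnMat κ q t l l' * Pstar κ μ l'
      = l.card.descFactorial μ.card / dimT κ l / (((l.card : ℝ) + 1) * (l.card + t))
        * ∑ ν ∈ upCovers hLF l, κ l ν * bx (fun x => q x ^ 2) l ν * dimI κ μ ν := by
  have hT : ∀ l', TnMat κ q t l l'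
      = ∑ ν ∈ levelFinset hLF (l.card + 1), pUp κ q t l ν * pDown κ ν l' := fun l' =>
    tsum_subtype_eq_sum _ (fun _ => mem_levelFinset.symm) fun ν => pUp κ q t l ν * pDown κ ν l'
  simp only [hT, Finset.sum_mul, mul_assoc]
  rw [Finset.sum_comm]
  simp only [← Finset.mul_sum]
  rw [Finset.sum_congr rfl fun ν hν =>
      congrArg _ (sum_pDown_mul_Pstar hκ hLF μ (mem_levelFinset.mp hν).2),
    ← Finset.sum_subset (Finset.filter_subset _ _) fun ν _ hν => by
      rw [pUp, if_neg (mt mem_upCovers.mpr hν), zero_mul],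
    Finset.mul_sum]
  refine Finset.sum_congr rfl fun ν hν => ?_
  have hc := mem_upCovers.mp hν
  have hD := (dimT_pos hκ hc.2.1).ne'
  rw [pUp_of_covers hκ hq ht hc]
  field_simp

lemma cast_descFactorial_succ {R : Type*} [Ring R] (n k : ℕ) :
    (n.descFactorial (k + 1) : R) = n.descFactorial k * (n - k) := by
  rw [← descPochhammer_eval_eq_descFactorial, descPochhammer_succ_eval,
    descPochhammer_eval_eq_descFactorial]

lemma sub_mul_Pstar_of_covers {ρ μ : Finset P} (h : CoversF ρ μ) (l : Finset P) :
    ((l.card : ℝ) + 1 - μ.card) * Pstar κ ρ l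
      = l.card.descFactorial μ.card * dimI κ ρ l / dimT κ l := by
  rw [Pstar, h.2.2.2, cast_descFactorial_succ]
  push_cast
  ring

lemma sub_mul_sum_downCovers_Pstar (μ l : Finset P) :
    ((l.card : ℝ) + 1 - μ.card) * ∑ ρ ∈ downCovers μ, κ ρ μ * bx q ρ μ ^ 2 * Pstar κ ρ l
      = l.card.descFactorial μ.card / dimT κ l
        * ∑ ρ ∈ downCovers μ, κ ρ μ * bx (fun x => q x ^ 2) ρ μ * dimI κ ρ l := by
  rw [Finset.mul_sum, Finset.mul_sum]
  refine Finset.sum_congr rfl fun ρ hρ => ?_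
  have hc := mem_downCovers.mp hρ
  rw [hc.bx_sq, mul_left_comm, sub_mul_Pstar_of_covers hc]
  ring

end UpDownChain

/-- the explicit action of the up/down Markov transition operator `T_n` on the
relative dimension functions `P*_μ`. -/
theorem statement9 {P : Type*} [PartialOrder P]
    (κ : Finset P → Finset P → ℝ) (q : P → ℝ) (t : ℝ)
    (hκ : EdgePositive κ) (hq : ∀ x : P, 0 < q x) (ht : 0 < t)
    (hLF : LevelsFinite P) (hUD : UDSelfDual κ)
    (hK : KerovCond κ (fun x => ((q x : ℂ)) ^ 2) (t : ℂ)) :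
    ∀ μ : Finset P, IsIdealF μ → ∀ n : ℕ, ∀ l : Finset P, IsIdealF l → l.card = n →
      (∑' l' : Lvl P n, TnMat κ q t l l'.1 * Pstar κ μ l'.1) - Pstar κ μ l
        = -(((μ.card : ℝ) * ((μ.card : ℝ) - 1 + t)) / (((n : ℝ) + 1) * ((n : ℝ) + t))) *
              Pstar κ μ l
          + (((n : ℝ) + 1 - (μ.card : ℝ)) / (((n : ℝ) + 1) * ((n : ℝ) + t))) *
              ∑' ρ : {ρ : Finset P // CoversF ρ μ},
                κ ρ.1 μ * (bx q ρ.1 μ) ^ 2 * Pstar κ ρ.1 l := by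
  intro μ _ n l hl hn
  subst hn
  have hK' : KerovCond κ (fun x => ((q x ^ 2 : ℝ) : ℂ)) t := by
    simpa only [Complex.ofReal_pow] using hK
  have hD := (dimT_pos hκ hl).ne'
  rw [tsum_subtype_eq_sum (levelFinset hLF l.card) (fun _ => mem_levelFinset.symm)
      fun l' => TnMat κ q t l l' * Pstar κ μ l',
    tsum_subtype_eq_sum (downCovers μ) (fun _ => mem_downCovers.symm)
      fun ρ => κ ρ μ * bx q ρ μ ^ 2 * Pstar κ ρ l,
    div_mul_eq_mul_div _ _ (∑ ρ ∈ downCovers μ, κ ρ μ * bx q ρ μ ^ 2 * Pstar κ ρ l),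
    sub_mul_sum_downCovers_Pstar, sum_TnMat_mul_Pstar hκ hq ht hLF μ l,
    sum_upCovers_mul_dimI hLF hUD hK' μ hl, Pstar]
  field_simp
  ring

end IdealGraph
end

section
/- Assume κ is UD-self-dual and 𝗊 : P → ℝ_{>0} is such that 𝗊² satisfies the Kerov condition with a parameter t > 0; fix ξ ∈ (0,1). Define 𝔐′_λ := (−1)^{|λ|} ((1−ξ)/ξ)^{|λ|} (|λ|!/dim λ) (∏_{□∈λ} 𝗊(□)^{−2}) · 𝔐_λ. Then the autoduality 𝔐′_λ(ρ) = 𝔐′_ρ(λ) holds for all λ, ρ ∈ 𝔾. -/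
open scoped BigOperators Classical

namespace IdealGraph

variable {P : Type*} [PartialOrder P]

lemma dimRel_eq_zero (κ : Finset P → Finset P → ℝ) :
    ∀ (n : ℕ) (μ l : Finset P), ¬ μ ⊆ l → dimRel κ n μ l = 0
  | 0, μ, l, h => by
      simp only [dimRel, ite_eq_right_iff]
      intro he; exact absurd (he ▸ Finset.Subset.refl μ) h
  | n + 1, μ, l, h => by
      simp only [dimRel]
      refine Finset.sum_eq_zero fun x hx => ?_
      rw [if_neg]
      rintro ⟨-, hsub⟩
      exact h (hsub.trans (Finset.erase_subset _ _))

lemma Pstar_eq_zero (κ : Finset P → Finset P → ℝ) {μ l : Finset P} (h : ¬ μ ⊆ l) :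
    Pstar κ μ l = 0 := by
  rw [Pstar, dimI, dimRel_eq_zero κ _ _ _ h, mul_zero, zero_div]

lemma main_lhs (κ : Finset P → Finset P → ℝ) (q : P → ℝ) (ξ : ℝ)
    (hq : ∀ x : P, 0 < q x) (hξ0 : 0 < ξ) (hξ1 : ξ < 1) (l ρ : Finset P) :
    (-1 : ℝ) ^ l.card * ((1 - ξ) / ξ) ^ l.card *
        ((Nat.factorial l.card : ℝ) / dimT κ l) * (∏ x ∈ l, (q x ^ 2)⁻¹) *
        Mfrak κ q ξ l ρ
      = ∑ μ ∈ l.powerset.filter (fun s => IsIdealF s),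
          ((ξ - 1) / ξ) ^ μ.card * (∏ x ∈ μ, (q x ^ 2)⁻¹) *
            (Pstar κ μ l * Pstar κ μ ρ) := by
  rw [Mfrak, Finset.mul_sum]
  refine Finset.sum_congr rfl fun μ hμ => ?_
  have hμl : μ ⊆ l := Finset.mem_powerset.1 (Finset.mem_filter.1 hμ).1
  have hcard : μ.card ≤ l.card := Finset.card_le_card hμl
  have hξ : ξ ≠ 0 := ne_of_gt hξ0
  have hξ1' : ξ - 1 ≠ 0 := by intro h; apply absurd hξ1; simp [sub_eq_zero.1 h]
  -- sign identity
  have h1 : (-1 : ℝ) ^ l.card * ((1 - ξ) / ξ) ^ l.card * (ξ / (ξ - 1)) ^ (l.card - μ.card)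
      = ((ξ - 1) / ξ) ^ μ.card := by
    have e1 : (-1 : ℝ) ^ l.card * ((1 - ξ) / ξ) ^ l.card = ((ξ - 1) / ξ) ^ l.card := by
      rw [← mul_pow]; congr 1; ring
    rw [e1, ← Nat.add_sub_cancel' hcard, pow_add, Nat.add_sub_cancel_left, mul_assoc,
      ← mul_pow, div_mul_div_comm, mul_comm (ξ - 1) ξ,
      div_self (mul_ne_zero hξ hξ1'), one_pow, mul_one]
  -- product identity
  have h2 : (∏ x ∈ l, (q x ^ 2)⁻¹) * (∏ x ∈ l \ μ, q x ^ 2)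
      = ∏ x ∈ μ, (q x ^ 2)⁻¹ := by
    rw [← Finset.prod_sdiff hμl (f := fun x => (q x ^ 2)⁻¹),
      mul_comm (∏ x ∈ l \ μ, (q x ^ 2)⁻¹), mul_assoc, ← Finset.prod_mul_distrib]
    have hone : ∀ x ∈ l \ μ, (q x ^ 2)⁻¹ * q x ^ 2 = 1 := fun x _ =>
      inv_mul_cancel₀ (pow_ne_zero 2 (ne_of_gt (hq x)))
    rw [Finset.prod_congr rfl hone, Finset.prod_const_one, mul_one]
  -- factorial identity
  have hfac : (Nat.factorial (l.card - μ.card) : ℝ) ≠ 0 := by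
    exact_mod_cast Nat.factorial_ne_zero _
  have h3 : (l.card.descFactorial μ.card : ℝ)
      = (Nat.factorial l.card : ℝ) / (Nat.factorial (l.card - μ.card) : ℝ) := by
    rw [eq_div_iff hfac, ← Nat.cast_mul, mul_comm, Nat.factorial_mul_descFactorial hcard]
  rw [show Pstar κ μ l
      = (l.card.descFactorial μ.card : ℝ) * dimI κ μ l / dimT κ l from rfl, h3]
  linear_combination
    ((Nat.factorial l.card : ℝ) * ((Nat.factorial (l.card - μ.card) : ℝ))⁻¹ * dimI κ μ l
        * (dimT κ l)⁻¹ * Pstar κ μ ρ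
        * ((∏ x ∈ l, (q x ^ 2)⁻¹) * (∏ x ∈ l \ μ, q x ^ 2))) * h1
    + ((Nat.factorial l.card : ℝ) * ((Nat.factorial (l.card - μ.card) : ℝ))⁻¹ * dimI κ μ l
        * (dimT κ l)⁻¹ * Pstar κ μ ρ * ((ξ - 1) / ξ) ^ μ.card) * h2


/-- autoduality of the normalized functions
`𝔐′_λ = (−1)^{|λ|} ((1−ξ)/ξ)^{|λ|} (|λ|!/dim λ) (∏_{□∈λ} 𝗊(□)^{−2}) 𝔐_λ`:
one has `𝔐′_λ(ρ) = 𝔐′_ρ(λ)`. -/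
theorem statement16 {P : Type*} [PartialOrder P]
    (κ : Finset P → Finset P → ℝ) (q : P → ℝ) (t ξ : ℝ)
    (hκ : EdgePositive κ) (hq : ∀ x : P, 0 < q x) (ht : 0 < t)
    (hξ0 : 0 < ξ) (hξ1 : ξ < 1)
    (hLF : LevelsFinite P) (hUD : UDSelfDual κ)
    (hK : KerovCond κ (fun x => ((q x : ℂ)) ^ 2) (t : ℂ)) :
    ∀ l ρ : Finset P, IsIdealF l → IsIdealF ρ →
      (-1 : ℝ) ^ l.card * ((1 - ξ) / ξ) ^ l.card *
          ((Nat.factorial l.card : ℝ) / dimT κ l) * (∏ x ∈ l, (q x ^ 2)⁻¹) *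
          Mfrak κ q ξ l ρ
        = (-1 : ℝ) ^ ρ.card * ((1 - ξ) / ξ) ^ ρ.card *
            ((Nat.factorial ρ.card : ℝ) / dimT κ ρ) * (∏ x ∈ ρ, (q x ^ 2)⁻¹) *
            Mfrak κ q ξ ρ l := by
  intro l ρ _ _
  rw [main_lhs κ q ξ hq hξ0 hξ1 l ρ, main_lhs κ q ξ hq hξ0 hξ1 ρ l]
  set T := (l ∩ ρ).powerset.filter (fun s => IsIdealF s) with hT
  have key : ∀ a b : Finset P, a ∩ b = l ∩ ρ →
      ∑ μ ∈ a.powerset.filter (fun s => IsIdealF s),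
          ((ξ - 1) / ξ) ^ μ.card * (∏ x ∈ μ, (q x ^ 2)⁻¹) *
            (Pstar κ μ a * Pstar κ μ b)
        = ∑ μ ∈ T, ((ξ - 1) / ξ) ^ μ.card * (∏ x ∈ μ, (q x ^ 2)⁻¹) *
            (Pstar κ μ a * Pstar κ μ b) := by
    intro a b hab
    refine (Finset.sum_subset ?_ ?_).symm
    · intro μ hμ
      rw [hT, Finset.mem_filter, Finset.mem_powerset, ← hab] at hμ
      exact Finset.mem_filter.2
        ⟨Finset.mem_powerset.2 (hμ.1.trans Finset.inter_subset_left), hμ.2⟩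
    · intro μ hμ hμT
      rw [Finset.mem_filter, Finset.mem_powerset] at hμ
      have hnb : ¬ μ ⊆ b := by
        intro hb
        exact hμT (Finset.mem_filter.2 ⟨Finset.mem_powerset.2
          (hab ▸ Finset.subset_inter hμ.1 hb), hμ.2⟩)
      rw [Pstar_eq_zero κ hnb, mul_zero, mul_zero]
  rw [key l ρ rfl, key ρ l (Finset.inter_comm ρ l)]
  exact Finset.sum_congr rfl fun μ _ => by rw [mul_comm (Pstar κ μ l)]


end IdealGraph
end

section
/- For every Young diagram λ and all complex numbers z, z′: Σ over addable boxes (i,j) of λ of (z + j − i)(z′ + j − i) minus Σ over removable boxes (i,j) of λ of (z + j − i)(z′ + j − i) equals 2|λ| + z·z′. (This is the identity expressing that the Kerov operators U δ_λ = Σ_{ν = λ+□}(z + j − i) δ_ν and D δ_λ = Σ_{μ = λ−□}(z′ + j − i) δ_μ on the Young graph satisfy [D,U] δ_λ = (2|λ| + zz′) δ_λ.) -/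
open scoped BigOperators

namespace KerovYoung

/-- A box `c` is addable for the Young diagram `μ`: it is not a cell of `μ`, and adjoining it
yields again a Young diagram. (Cells are indexed from `0`; the content `j − i` of a box is
the same in `0`- and `1`-based coordinates.) -/
def AddableBox (μ : YoungDiagram) (c : ℕ × ℕ) : Prop :=
  c ∉ μ ∧ ∃ ν : YoungDiagram, ν.cells = insert c μ.cells

/-- A box `c` is removable for the Young diagram `μ`: it is a cell of `μ`, and deleting it
yields again a Young diagram. -/
def RemovableBox (μ : YoungDiagram) (c : ℕ × ℕ) : Prop :=
  c ∈ μ ∧ ∃ ν : YoungDiagram, ν.cells = μ.cells.erase c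

open YoungDiagram Finset

lemma rowLen_pos_iff (μ : YoungDiagram) (i : ℕ) : 0 < μ.rowLen i ↔ i < μ.colLen 0 := by
  rw [← mem_iff_lt_rowLen, mem_iff_lt_colLen]

lemma addable_iff (μ : YoungDiagram) (i j : ℕ) :
    AddableBox μ (i, j) ↔ j = μ.rowLen i ∧ (i = 0 ∨ μ.rowLen i < μ.rowLen (i - 1)) := by
  constructor
  · rintro ⟨hnm, ν, hν⟩
    have hmemν : (i, j) ∈ ν := by
      show (i, j) ∈ ν.cells
      rw [hν]; exact Finset.mem_insert_self _ _
    have hsub : ∀ c : ℕ × ℕ, c ∈ ν → c ≠ (i, j) → c ∈ μ := by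
      intro c hc hne
      have : c ∈ ν.cells := hc
      rw [hν, Finset.mem_insert] at this
      rcases this with h | h
      · exact absurd h hne
      · exact h
    have hle : μ.rowLen i ≤ j := by
      by_contra h
      exact hnm (mem_iff_lt_rowLen.mpr (lt_of_not_ge h))
    have hge : j ≤ μ.rowLen i := by
      by_contra h
      push_neg at h
      have : (i, μ.rowLen i) ∈ μ := by
        apply hsub _ (ν.up_left_mem le_rfl (le_of_lt h) hmemν)
        simp only [ne_eq, Prod.mk.injEq, true_and]
        omega
      simp [mem_iff_lt_rowLen] at this
    refine ⟨le_antisymm hge hle, ?_⟩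
    rcases Nat.eq_zero_or_pos i with h0 | hpos
    · exact Or.inl h0
    · right
      have : (i - 1, j) ∈ μ := by
        apply hsub _ (ν.up_left_mem (Nat.sub_le i 1) le_rfl hmemν)
        simp only [ne_eq, Prod.mk.injEq]
        intro ⟨h1, _⟩
        omega
      rw [mem_iff_lt_rowLen] at this
      omega
  · rintro ⟨rfl, hcond⟩
    have hnm : (i, μ.rowLen i) ∉ μ := by simp [mem_iff_lt_rowLen]
    refine ⟨hnm, ⟨insert (i, μ.rowLen i) μ.cells, ?_⟩, rfl⟩
    rintro ⟨a, b⟩ ⟨x, y⟩ hle hc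
    obtain ⟨hxa, hyb⟩ := Prod.le_def.mp hle
    simp only at hxa hyb
    simp only [Finset.coe_insert, Set.mem_insert_iff, Finset.mem_coe, YoungDiagram.mem_cells,
      Prod.mk.injEq] at hc ⊢
    rcases hc with ⟨ha, hb⟩ | h
    · rw [ha] at hxa
      rw [hb] at hyb
      by_cases hxi : x = i
      · rcases Nat.lt_or_ge y (μ.rowLen i) with hy | hy
        · refine Or.inr ?_
          rw [mem_iff_lt_rowLen, hxi]
          exact hy
        · exact Or.inl ⟨hxi, by omega⟩
      · right
        rw [mem_iff_lt_rowLen]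
        rcases hcond with h0 | hlt'
        · omega
        · have : μ.rowLen (i - 1) ≤ μ.rowLen x := μ.rowLen_anti _ _ (by omega)
          omega
    · exact Or.inr (μ.up_left_mem hxa hyb h)

lemma removable_iff (μ : YoungDiagram) (i j : ℕ) :
    RemovableBox μ (i, j) ↔ j + 1 = μ.rowLen i ∧ μ.rowLen (i + 1) < μ.rowLen i := by
  constructor
  · rintro ⟨hm, ν, hν⟩
    have hj : j < μ.rowLen i := mem_iff_lt_rowLen.mp hm
    have hnν : (i, j) ∉ ν := by
      show (i, j) ∉ ν.cells
      rw [hν]; simp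
    have hkey : ∀ c : ℕ × ℕ, c ∈ μ → c ≠ (i, j) → (i, j) ≤ c → False := by
      intro c hc hne hle
      have hcν : c ∈ ν := by
        show c ∈ ν.cells
        rw [hν, Finset.mem_erase]
        exact ⟨hne, hc⟩
      exact hnν (ν.isLowerSet hle hcν)
    constructor
    · by_contra h
      have hj1 : j + 1 < μ.rowLen i := by omega
      exact hkey (i, j + 1) (mem_iff_lt_rowLen.mpr hj1) (by simp) (Prod.le_def.mpr ⟨le_rfl, by omega⟩)
    · by_contra h
      push_neg at h
      have : j < μ.rowLen (i + 1) := lt_of_lt_of_le hj h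
      exact hkey (i + 1, j) (mem_iff_lt_rowLen.mpr this) (by simp) (Prod.le_def.mpr ⟨by omega, le_rfl⟩)
  · rintro ⟨hj, hlt⟩
    have hm : (i, j) ∈ μ := mem_iff_lt_rowLen.mpr (by omega)
    refine ⟨hm, ⟨μ.cells.erase (i, j), ?_⟩, rfl⟩
    rintro ⟨a, b⟩ ⟨x, y⟩ hle hc
    obtain ⟨hxa, hyb⟩ := Prod.le_def.mp hle
    simp only at hxa hyb
    simp only [Finset.coe_erase, Set.mem_diff, Finset.mem_coe, YoungDiagram.mem_cells,
      Set.mem_singleton_iff, Prod.mk.injEq] at hc ⊢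
    obtain ⟨hcμ, hcne⟩ := hc
    refine ⟨μ.up_left_mem hxa hyb hcμ, ?_⟩
    rintro ⟨hx, hy⟩
    subst hx; subst hy
    have hab : b < μ.rowLen a := mem_iff_lt_rowLen.mp hcμ
    by_cases hax : a = x
    · subst hax
      have : b ≠ y := fun h => hcne ⟨rfl, h⟩
      omega
    · have h1 : μ.rowLen a ≤ μ.rowLen (x + 1) := μ.rowLen_anti _ _ (by omega)
      omega

lemma card_eq (μ : YoungDiagram) :
    μ.card = ∑ i ∈ Finset.range (μ.colLen 0), μ.rowLen i := by
  have hcells : μ.cells = (Finset.range (μ.colLen 0)).biUnion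
      (fun i => {i} ×ˢ Finset.range (μ.rowLen i)) := by
    ext ⟨i, j⟩
    simp only [Finset.mem_biUnion, Finset.mem_range, Finset.mem_product, Finset.mem_singleton,
      YoungDiagram.mem_cells]
    constructor
    · intro h
      exact ⟨i, mem_iff_lt_colLen.mp (μ.up_left_mem le_rfl (Nat.zero_le j) h),
        rfl, mem_iff_lt_rowLen.mp h⟩
    · rintro ⟨a, ha, rfl, hj⟩
      exact mem_iff_lt_rowLen.mpr hj
  rw [YoungDiagram.card, hcells, Finset.card_biUnion]
  · apply Finset.sum_congr rfl
    intro i _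
    simp
  · intro a _ b _ hab
    simp only [Finset.disjoint_left, Finset.mem_product, Finset.mem_singleton]
    rintro ⟨p, q⟩ ⟨hp, _⟩ ⟨hp', _⟩
    exact hab (hp ▸ hp')

lemma mem_addFS (μ : YoungDiagram) (c : ℕ × ℕ) :
    AddableBox μ c ↔ c ∈ ((Finset.range (μ.colLen 0 + 1)).filter
      (fun i => i = 0 ∨ μ.rowLen i < μ.rowLen (i - 1))).image (fun i => (i, μ.rowLen i)) := by
  obtain ⟨i, j⟩ := c
  rw [addable_iff]
  simp only [Finset.mem_image, Finset.mem_filter, Finset.mem_range, Prod.mk.injEq]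
  constructor
  · rintro ⟨rfl, hcond⟩
    refine ⟨i, ⟨?_, hcond⟩, rfl, rfl⟩
    rcases hcond with h0 | hlt
    · omega
    · have : 0 < μ.rowLen (i - 1) := by omega
      rw [rowLen_pos_iff] at this
      omega
  · rintro ⟨a, ⟨_, hcond⟩, rfl, rfl⟩
    exact ⟨rfl, hcond⟩

lemma mem_remFS (μ : YoungDiagram) (c : ℕ × ℕ) :
    RemovableBox μ c ↔ c ∈ ((Finset.range (μ.colLen 0)).filter
      (fun i => μ.rowLen (i + 1) < μ.rowLen i)).image (fun i => (i, μ.rowLen i - 1)) := by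
  obtain ⟨i, j⟩ := c
  rw [removable_iff]
  simp only [Finset.mem_image, Finset.mem_filter, Finset.mem_range, Prod.mk.injEq]
  constructor
  · rintro ⟨hj, hlt⟩
    have : 0 < μ.rowLen i := by omega
    rw [rowLen_pos_iff] at this
    exact ⟨i, ⟨this, hlt⟩, rfl, by omega⟩
  · rintro ⟨a, ⟨ha, hcond⟩, rfl, rfl⟩
    have : 0 < μ.rowLen a := (rowLen_pos_iff μ a).mpr ha
    exact ⟨by omega, hcond⟩

lemma tsum_pred_eq {p : ℕ × ℕ → Prop} {s : Finset (ℕ × ℕ)} (h : ∀ c, p c ↔ c ∈ s)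
    (g : ℕ × ℕ → ℂ) : ∑' c : {c // p c}, g c.1 = ∑ c ∈ s, g c := by
  rw [← Finset.tsum_subtype s g]
  exact (Equiv.subtypeEquivRight h).tsum_eq (fun c : {c // c ∈ s} => g c.1)

lemma sum_odds (r : ℕ) : ∑ i ∈ Finset.range r, (2 * (i : ℂ) + 1) = (r : ℂ) ^ 2 := by
  induction r with
  | zero => simp
  | succ n ih => rw [Finset.sum_range_succ, ih]; push_cast; ring

/-- for every Young diagram `λ` and all `z, z' ∈ ℂ`,
`Σ_{(i,j) addable} (z + j − i)(z' + j − i) − Σ_{(i,j) removable} (z + j − i)(z' + j − i)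
  = 2|λ| + z z'`. -/
theorem statement17 (μ : YoungDiagram) (z z' : ℂ) :
    (∑' c : {c : ℕ × ℕ // AddableBox μ c},
        (z + (c.1.2 : ℂ) - (c.1.1 : ℂ)) * (z' + (c.1.2 : ℂ) - (c.1.1 : ℂ))) -
      (∑' c : {c : ℕ × ℕ // RemovableBox μ c},
        (z + (c.1.2 : ℂ) - (c.1.1 : ℂ)) * (z' + (c.1.2 : ℂ) - (c.1.1 : ℂ)))
    = 2 * (μ.card : ℂ) + z * z' := by
  classical
  set r := μ.colLen 0 with hrdef
  set F : ℕ → ℂ := fun i => (z + (μ.rowLen i : ℂ) - (i : ℂ)) * (z' + (μ.rowLen i : ℂ) - (i : ℂ))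
    with hF
  set G : ℕ → ℂ := fun i =>
      (z + (μ.rowLen i : ℂ) - 1 - (i : ℂ)) * (z' + (μ.rowLen i : ℂ) - 1 - (i : ℂ)) with hG
  set PA : ℕ → Prop := fun i => i = 0 ∨ μ.rowLen i < μ.rowLen (i - 1) with hPA
  set PR : ℕ → Prop := fun i => μ.rowLen (i + 1) < μ.rowLen i with hPR
  have hinj : ∀ (w : Finset ℕ) (f : ℕ → ℕ), ∀ x ∈ w, ∀ y ∈ w,
      (x, f x) = (y, f y) → x = y := by
    intro w f x _ y _ h
    exact congrArg Prod.fst h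
  have hA : (∑' c : {c : ℕ × ℕ // AddableBox μ c},
        (z + (c.1.2 : ℂ) - (c.1.1 : ℂ)) * (z' + (c.1.2 : ℂ) - (c.1.1 : ℂ)))
      = ∑ i ∈ (Finset.range (r + 1)).filter PA, F i := by
    rw [tsum_pred_eq (mem_addFS μ)
      (fun q => (z + (q.2 : ℂ) - (q.1 : ℂ)) * (z' + (q.2 : ℂ) - (q.1 : ℂ)))]
    rw [Finset.sum_image (hinj _ _)]
  have hR : (∑' c : {c : ℕ × ℕ // RemovableBox μ c},
        (z + (c.1.2 : ℂ) - (c.1.1 : ℂ)) * (z' + (c.1.2 : ℂ) - (c.1.1 : ℂ)))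
      = ∑ i ∈ (Finset.range r).filter PR, G i := by
    rw [tsum_pred_eq (mem_remFS μ)
      (fun q => (z + (q.2 : ℂ) - (q.1 : ℂ)) * (z' + (q.2 : ℂ) - (q.1 : ℂ)))]
    rw [Finset.sum_image (hinj _ _)]
    apply Finset.sum_congr rfl
    intro i hi
    simp only [Finset.mem_filter, Finset.mem_range] at hi
    have h1 : 1 ≤ μ.rowLen i := (rowLen_pos_iff μ i).mpr hi.1
    rw [hG]
    rw [Nat.cast_sub h1]
    push_cast
    ring
  rw [hA, hR]
  have hkey : ∑ i ∈ (Finset.range (r + 1)).filter (fun i => ¬ PA i), F i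
      = ∑ i ∈ (Finset.range r).filter (fun i => ¬ PR i), G i := by
    apply Finset.sum_nbij' (fun i => i - 1) (fun i => i + 1)
    · intro a ha
      simp only [hPA, Finset.mem_filter, Finset.mem_range, not_or, not_lt] at ha
      obtain ⟨har, ha0, hge⟩ := ha
      have heq : μ.rowLen (a - 1) = μ.rowLen a :=
        le_antisymm hge (μ.rowLen_anti _ _ (by omega))
      simp only [hPR, Finset.mem_filter, Finset.mem_range, not_lt]
      have h2 : a - 1 + 1 = a := by omega
      rw [h2, heq]
      exact ⟨by omega, le_rfl⟩
    · intro a ha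
      simp only [hPR, Finset.mem_filter, Finset.mem_range, not_lt] at ha
      obtain ⟨har, hge⟩ := ha
      simp only [hPA, Finset.mem_filter, Finset.mem_range, not_or, not_lt,
        Nat.add_sub_cancel]
      exact ⟨by omega, by omega, hge⟩
    · intro a ha
      simp only [hPA, Finset.mem_filter, Finset.mem_range, not_or] at ha
      omega
    · intro a _
      omega
    · intro a ha
      simp only [hPA, Finset.mem_filter, Finset.mem_range, not_or, not_lt] at ha
      obtain ⟨har, ha0, hge⟩ := ha
      have heq : μ.rowLen (a - 1) = μ.rowLen a :=
        le_antisymm hge (μ.rowLen_anti _ _ (by omega))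
      rw [hF, hG]
      simp only
      rw [heq, Nat.cast_sub (by omega : 1 ≤ a)]
      push_cast
      ring
  have e1 := Finset.sum_filter_add_sum_filter_not (Finset.range (r + 1)) PA F
  have e2 := Finset.sum_filter_add_sum_filter_not (Finset.range r) PR G
  have hrow0 : μ.rowLen r = 0 := by
    by_contra h
    have h2 := (rowLen_pos_iff μ r).mp (Nat.pos_of_ne_zero h)
    omega
  have hL : ∑ i ∈ Finset.range r, (μ.rowLen i : ℂ) = (μ.card : ℂ) := by
    rw [hrdef, card_eq μ, Nat.cast_sum]
  have hFr : F r = (z - (r : ℂ)) * (z' - (r : ℂ)) := by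
    rw [hF]
    simp only
    rw [hrow0]
    push_cast
    ring
  have hsub : ∑ i ∈ Finset.range r, F i - ∑ i ∈ Finset.range r, G i
      = ∑ i ∈ Finset.range r, ((z + z') + 2 * (μ.rowLen i : ℂ) - (2 * (i : ℂ) + 1)) := by
    rw [← Finset.sum_sub_distrib]
    apply Finset.sum_congr rfl
    intro i _
    rw [hF, hG]
    ring
  have hexp : ∑ i ∈ Finset.range r, ((z + z') + 2 * (μ.rowLen i : ℂ) - (2 * (i : ℂ) + 1))
      = (r : ℂ) * (z + z') + 2 * (μ.card : ℂ) - (r : ℂ) ^ 2 := by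
    rw [Finset.sum_sub_distrib, Finset.sum_add_distrib, Finset.sum_const, Finset.card_range,
      sum_odds, ← Finset.mul_sum, hL, nsmul_eq_mul]
  have hmain : ∑ i ∈ Finset.range (r + 1), F i - ∑ i ∈ Finset.range r, G i
      = 2 * (μ.card : ℂ) + z * z' := by
    rw [Finset.sum_range_succ]
    linear_combination hsub + hexp + hFr
  linear_combination e1 - e2 - hkey + hmain


end KerovYoung
end

section
/- For all complex numbers α, τ and every partition λ = (λ₁ ≥ λ₂ ≥ … ≥ λ_ℓ > 0) of n with ℓ parts, set r_k := #{i : λ_i = k} for k ≥ 1. Then Σ_{k ≥ 2} k(k−1−α) · [ (r_k + 1) r_{k−1} − r_k (r_{k−1} + 1) ] + (r_1 + 1)(τ + ℓα) − r_1 (τ + (ℓ−1)α) = 2n + τ, where the sum over k has only finitely many nonzero terms. -/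
open scoped BigOperators

namespace KerovKingman

private lemma telesc (f c : ℕ → ℂ) : ∀ M : ℕ,
    ∑ k ∈ Finset.range (M + 2), (if 2 ≤ k then f k * (c (k - 1) - c k) else 0)
      = (∑ j ∈ Finset.range (M + 1), if 1 ≤ j then (f (j + 1) - f j) * c j else 0)
        + f 1 * c 1 - f (M + 1) * c (M + 1) := by
  intro M
  induction M with
  | zero =>
      rw [Finset.sum_range_succ, Finset.sum_range_succ, Finset.sum_range_zero,
        Finset.sum_range_succ, Finset.sum_range_zero]
      norm_num
  | succ M ih =>
      have e1 := Finset.sum_range_succ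
        (fun k => if 2 ≤ k then f k * (c (k - 1) - c k) else 0) (M + 2)
      have e2 := Finset.sum_range_succ
        (fun j => if 1 ≤ j then (f (j + 1) - f j) * c j else 0) (M + 1)
      rw [show M + 1 + 2 = M + 2 + 1 from rfl, e1, ih, e2,
        if_pos (show 2 ≤ M + 2 by omega), if_pos (show 1 ≤ M + 1 by omega),
        show M + 2 - 1 = M + 1 from rfl]
      ring

/-- the Kerov-condition identity on the Kingman graph: for all `α, τ ∈ ℂ` and
every partition `λ` of `n` with `ℓ` parts and `r_k` parts equal to `k`,
`Σ_{k≥2} k(k−1−α)[(r_k+1) r_{k−1} − r_k (r_{k−1}+1)] + (r_1+1)(τ+ℓα) − r_1(τ+(ℓ−1)α)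
  = 2n + τ`, the sum over `k` having only finitely many nonzero terms. -/
theorem statement18 (α τ : ℂ) (n : ℕ) (lam : n.Partition) :
    (∑' k : ℕ, if 2 ≤ k then
        (k : ℂ) * ((k : ℂ) - 1 - α) *
          (((lam.parts.count k : ℂ) + 1) * (lam.parts.count (k - 1) : ℂ) -
            (lam.parts.count k : ℂ) * ((lam.parts.count (k - 1) : ℂ) + 1))
      else 0)
      + ((lam.parts.count 1 : ℂ) + 1) * (τ + (Multiset.card lam.parts : ℂ) * α)
      - (lam.parts.count 1 : ℂ) * (τ + ((Multiset.card lam.parts : ℂ) - 1) * α)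
    = 2 * (n : ℂ) + τ := by
  set c : ℕ → ℂ := fun k => (lam.parts.count k : ℂ) with hc
  set f : ℕ → ℂ := fun k => (k : ℂ) * ((k : ℂ) - 1 - α) with hf
  -- counts vanish above n
  have hbig : ∀ k, n < k → lam.parts.count k = 0 := by
    intro k hk
    rw [Multiset.count_eq_zero]
    intro hmem
    have := Multiset.single_le_sum (fun x _ => Nat.zero_le x) k hmem
    rw [lam.parts_sum] at this
    omega
  have h0 : (0 : ℕ) ∉ lam.parts := fun h => lt_irrefl 0 (lam.parts_pos h)
  -- tsum equals a finite sum
  have htsum : (∑' k : ℕ, if 2 ≤ k then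
        (k : ℂ) * ((k : ℂ) - 1 - α) *
          (((lam.parts.count k : ℂ) + 1) * (lam.parts.count (k - 1) : ℂ) -
            (lam.parts.count k : ℂ) * ((lam.parts.count (k - 1) : ℂ) + 1))
      else 0)
      = ∑ k ∈ Finset.range (n + 2), (if 2 ≤ k then f k * (c (k - 1) - c k) else 0) := by
    rw [tsum_eq_sum (s := Finset.range (n + 2)) ?_]
    · refine Finset.sum_congr rfl fun k _ => ?_
      split
      · simp only [hf, hc]; ring
      · rfl
    · intro k hk
      simp only [Finset.mem_range, not_lt] at hk
      rw [if_pos (by omega), hbig k (by omega), hbig (k - 1) (by omega)]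
      simp
  rw [htsum, telesc f c n]
  have hcn1 : c (n + 1) = 0 := by simp [hc, hbig (n + 1) (by omega)]
  rw [hcn1]
  -- the two count-sum facts
  have hsub : lam.parts.toFinset ⊆ Finset.range (n + 1) := by
    intro k hk
    rw [Multiset.mem_toFinset] at hk
    have := Multiset.single_le_sum (fun x _ => Nat.zero_le x) k hk
    rw [lam.parts_sum] at this
    simp only [Finset.mem_range]; omega
  have hzero : ∀ x ∈ Finset.range (n + 1), x ∉ lam.parts.toFinset →
      lam.parts.count x = 0 := fun x _ hx =>
    Multiset.count_eq_zero_of_notMem (by simpa [Multiset.mem_toFinset] using hx)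
  have hA : ∑ x ∈ lam.parts.toFinset, lam.parts.count x * x = n := by
    have h1 := Finset.sum_multiset_map_count lam.parts (fun x => x)
    simp only [smul_eq_mul, Multiset.map_id'] at h1
    rw [← h1, lam.parts_sum]
  have hsumn : ∑ j ∈ Finset.range (n + 1), lam.parts.count j * j = n := by
    rw [← Finset.sum_subset hsub (fun x hx h => by rw [hzero x hx h]; ring), hA]
  have hcard : ∑ j ∈ Finset.range (n + 1), lam.parts.count j = Multiset.card lam.parts := by
    rw [← Multiset.toFinset_sum_count_eq lam.parts]
    exact (Finset.sum_subset hsub hzero).symm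
  -- rewrite the telescoped sum
  have hstep : (∑ j ∈ Finset.range (n + 1), if 1 ≤ j then (f (j + 1) - f j) * c j else 0)
      = ∑ j ∈ Finset.range (n + 1), (2 * (j : ℂ) * c j - α * c j) := by
    refine Finset.sum_congr rfl fun j _ => ?_
    rcases Nat.eq_zero_or_pos j with hj | hj
    · subst hj
      have hc0 : c 0 = 0 := by simp [hc, Multiset.count_eq_zero_of_notMem h0]
      simp [hc0]
    · rw [if_pos (show 1 ≤ j from hj)]
      simp only [hf]
      push_cast
      ring
  rw [hstep, Finset.sum_sub_distrib]
  have e1 : ∑ j ∈ Finset.range (n + 1), 2 * (j : ℂ) * c j = 2 * (n : ℂ) := by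
    have h := congrArg (Nat.cast : ℕ → ℂ) hsumn
    push_cast at h
    calc ∑ j ∈ Finset.range (n + 1), 2 * (j : ℂ) * c j
        = 2 * ∑ j ∈ Finset.range (n + 1), c j * (j : ℂ) := by
          rw [Finset.mul_sum]; exact Finset.sum_congr rfl fun j _ => by ring
      _ = 2 * (n : ℂ) := by rw [h]
  have e2 : ∑ j ∈ Finset.range (n + 1), α * c j = α * (Multiset.card lam.parts : ℂ) := by
    have h := congrArg (Nat.cast : ℕ → ℂ) hcard
    push_cast at h
    rw [← Finset.mul_sum, h]
  rw [e1, e2]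
  simp only [hf, hc]
  push_cast
  ring

end KerovKingman
end
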